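/- arXiv:1710.09302 — 3 statements merged into one kernel-verified Lean document; each statement's English description precedes it below -/
import Mathlib

section
/- Let Ω = {ω₁,…,ω_R} be a finite partition of ℝ^D in which every cell ω_r has nonempty interior, let a_r ∈ ℝ^D and b_r ∈ ℝ for r = 1,…,R, and define the multivariate linear spline s : ℝ^D → ℝ by s(x) = ⟨a_r, x⟩ + b_r whenever x ∈ ω_r. Then s is a convex function if and only if s(x) = max_{r=1,…,R} (⟨a_r, x⟩ + b_r) for every x ∈ ℝ^D. -/
open Matrix

/-- a multivariate linear spline, defined on a finite partition of
`ℝ^D` whose cells all have nonempty interior, is convex if and only if it is the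
pointwise maximum of its affine pieces. -/
theorem linear_spline_convex_iff_max (D R : ℕ) (hR : 1 ≤ R)
    (ω : Fin R → Set (Fin D → ℝ))
    (hdisj : ∀ r r', r ≠ r' → ω r ∩ ω r' = ∅)
    (hcover : ⋃ r, ω r = Set.univ)
    (hint : ∀ r, (interior (ω r)).Nonempty)
    (a : Fin R → (Fin D → ℝ)) (b : Fin R → ℝ)
    (s : (Fin D → ℝ) → ℝ)
    (hs : ∀ r, ∀ x ∈ ω r, s x = a r ⬝ᵥ x + b r) :
    ConvexOn ℝ Set.univ s ↔ ∀ x, s x = ⨆ r, (a r ⬝ᵥ x + b r) := by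
  have hne : Nonempty (Fin R) := ⟨⟨0, hR⟩⟩
  constructor
  · intro hconv x
    -- the affine pieces are global minorants
    have key : ∀ r y, a r ⬝ᵥ y + b r ≤ s y := by
      intro r y
      obtain ⟨x₀, hx₀⟩ := hint r
      obtain ⟨ε, hε, hball⟩ := Metric.mem_nhds_iff.mp (mem_interior_iff_mem_nhds.mp hx₀)
      set t : ℝ := min (1/2) (ε / (2 * (‖y - x₀‖ + 1))) with ht_def
      have hnorm : (0:ℝ) < ‖y - x₀‖ + 1 := by positivity
      have ht : 0 < t := lt_min (by norm_num) (by positivity)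
      have ht1 : t < 1 := lt_of_le_of_lt (min_le_left _ _) (by norm_num)
      have htε : t * ‖y - x₀‖ < ε := by
        have h1 : t ≤ ε / (2 * (‖y - x₀‖ + 1)) := min_le_right _ _
        have h2 : t * ‖y - x₀‖ ≤ ε / (2 * (‖y - x₀‖ + 1)) * ‖y - x₀‖ :=
          mul_le_mul_of_nonneg_right h1 (norm_nonneg _)
        have h3 : ε / (2 * (‖y - x₀‖ + 1)) * ‖y - x₀‖ < ε := by
          rw [div_mul_eq_mul_div, div_lt_iff₀ (by positivity)]
          nlinarith [norm_nonneg (y - x₀)]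
        linarith
      set z : (Fin D → ℝ) := x₀ + t • (y - x₀) with hz_def
      have hzball : z ∈ Metric.ball x₀ ε := by
        rw [Metric.mem_ball, dist_eq_norm]
        have : z - x₀ = t • (y - x₀) := by rw [hz_def]; abel
        rw [this, norm_smul, Real.norm_eq_abs, abs_of_pos ht]
        exact htε
      have hzω : z ∈ ω r := hball hzball
      have hx₀ω : x₀ ∈ ω r := interior_subset hx₀
      have hconvx := hconv.2 (Set.mem_univ x₀) (Set.mem_univ y)
        (by linarith : (0:ℝ) ≤ 1 - t) ht.le (by ring)
      have hcomb : (1 - t) • x₀ + t • y = z := by rw [hz_def]; module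
      rw [hcomb] at hconvx
      have hsz : s z = a r ⬝ᵥ z + b r := hs r z hzω
      have hsx₀ : s x₀ = a r ⬝ᵥ x₀ + b r := hs r x₀ hx₀ω
      have hdot : a r ⬝ᵥ z = a r ⬝ᵥ x₀ + t * (a r ⬝ᵥ y - a r ⬝ᵥ x₀) := by
        rw [hz_def, dotProduct_add, dotProduct_smul, dotProduct_sub, smul_eq_mul]
      rw [hsz, hsx₀, hdot] at hconvx
      simp only [smul_eq_mul] at hconvx
      have h2 : t * (a r ⬝ᵥ y + b r) ≤ t * s y := by nlinarith
      exact le_of_mul_le_mul_left h2 ht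
    have hbdd : BddAbove (Set.range fun r => a r ⬝ᵥ x + b r) :=
      Set.Finite.bddAbove (Set.finite_range _)
    obtain ⟨r, hr⟩ : ∃ r, x ∈ ω r := by
      have : x ∈ ⋃ r, ω r := hcover ▸ Set.mem_univ x
      exact Set.mem_iUnion.mp this
    refine le_antisymm ?_ (ciSup_le fun r' => key r' x)
    rw [hs r x hr]
    exact le_ciSup hbdd r
  · intro h
    refine ⟨convex_univ, ?_⟩
    intro x _ y _ μ ν hμ hν hμν
    rw [h (μ • x + ν • y), h x, h y]
    have hbx : BddAbove (Set.range fun r => a r ⬝ᵥ x + b r) :=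
      Set.Finite.bddAbove (Set.finite_range _)
    have hby : BddAbove (Set.range fun r => a r ⬝ᵥ y + b r) :=
      Set.Finite.bddAbove (Set.finite_range _)
    refine ciSup_le fun r => ?_
    have hdot : a r ⬝ᵥ (μ • x + ν • y) + b r
        = μ * (a r ⬝ᵥ x + b r) + ν * (a r ⬝ᵥ y + b r) := by
      rw [dotProduct_add, dotProduct_smul, dotProduct_smul, smul_eq_mul, smul_eq_mul]
      linear_combination (b r) * hμν.symm
    rw [hdot]
    simp only [smul_eq_mul]
    exact add_le_add (mul_le_mul_of_nonneg_left (le_ciSup hbx r) hμ)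
      (mul_le_mul_of_nonneg_left (le_ciSup hby r) hν)
end

section
/- Fix D ≥ 1, an integer C ≥ 2, a real K > 0, x ∈ ℝ^D with ‖x‖ = 1, and a label y ∈ {1,…,C}. Consider the loss L(A₁,…,A_C) = −⟨A_y, x⟩ + log(Σ_{c=1}^C exp(⟨A_c, x⟩)) on tuples (A₁,…,A_C) ∈ (ℝ^D)^C satisfying Σ_{c=1}^C ‖A_c‖² ≤ K. Then the unique global minimizer of L on this constraint set is given by A_c* = √((C−1)K/C) · x for c = y and A_c* = −√(K/(C(C−1))) · x for every c ≠ y. -/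
/-!
The loss is convex in the templates, and its gradient with respect to `A c` at `A*` is
`(softmax s c - [c = y]) • x`, where `s c = ⟪A* c, x⟫` takes the value `a` at `y` and `-b` elsewhere.
Because `a = (C - 1) b`, this gradient equals `-μ • A* c` for some `μ > 0`, so the gradient inequality gives
`L A - L A* ≥ μ (‖A*‖² - ⟪A*, A⟫) ≥ μ/2 ‖A - A*‖²` whenever `‖A‖² ≤ K = ‖A*‖²`.
-/

open RealInnerProductSpace Finset

section Softmax

variable {ι : Type*} [Fintype ι]

noncomputable def softmax (s : ι → ℝ) (c : ι) : ℝ :=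
  Real.exp (s c) / ∑ i, Real.exp (s i)

lemma sum_exp_pos [Nonempty ι] (s : ι → ℝ) : 0 < ∑ i, Real.exp (s i) :=
  sum_pos (fun i _ => Real.exp_pos (s i)) univ_nonempty

lemma softmax_nonneg (s : ι → ℝ) (c : ι) : 0 ≤ softmax s c :=
  div_nonneg (Real.exp_pos _).le (sum_nonneg fun _ _ => (Real.exp_pos _).le)

lemma sum_softmax [Nonempty ι] (s : ι → ℝ) : ∑ c, softmax s c = 1 := by
  simp only [softmax, ← sum_div, div_self (sum_exp_pos s).ne']

/-- Convexity of log-sum-exp: `softmax s` is its gradient at `s`. -/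
lemma sum_softmax_mul_sub_le [Nonempty ι] (s t : ι → ℝ) :
    ∑ c, softmax s c * (t c - s c) ≤
      Real.log (∑ c, Real.exp (t c)) - Real.log (∑ c, Real.exp (s c)) := by
  have hJensen : Real.exp (∑ c, softmax s c * (t c - s c)) ≤
      ∑ c, softmax s c * Real.exp (t c - s c) := by
    simpa only [smul_eq_mul] using convexOn_exp.map_sum_le (fun c _ => softmax_nonneg s c)
      (sum_softmax s) (fun c _ => Set.mem_univ (t c - s c))
  have hsum : ∑ c, softmax s c * Real.exp (t c - s c) =
      (∑ c, Real.exp (t c)) / ∑ c, Real.exp (s c) := by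
    rw [sum_div]
    refine sum_congr rfl fun c _ => ?_
    rw [softmax, Real.exp_sub]
    field_simp
  rw [← Real.log_div (sum_exp_pos t).ne' (sum_exp_pos s).ne', ← hsum,
    Real.le_log_iff_exp_le (hsum ▸ div_pos (sum_exp_pos t) (sum_exp_pos s))]
  exact hJensen

end Softmax

lemma sum_ite_eq_add_mul {ι R : Type*} [Fintype ι] [DecidableEq ι] [CommRing R] (y : ι) (u v : R) :
    ∑ c, (if c = y then u else v) = u + ((Fintype.card ι : R) - 1) * v := by
  have h : ∀ c, (if c = y then u else v) = v + if c = y then u - v else 0 := by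
    intro c; split_ifs <;> ring
  simp only [h, sum_add_distrib, sum_ite_eq', mem_univ, if_true, sum_const, card_univ, nsmul_eq_mul]
  ring

/-- `softmax s - e_y` is the gradient of the loss in the scores `s`, so this is the KKT condition
on the sphere `‖s‖² = K`. -/
lemma exists_softmax_sub_ite_eq_neg_mul {ι : Type*} [Fintype ι] [DecidableEq ι] (y : ι)
    {a b : ℝ} (hb : 0 < b) (hab : a = ((Fintype.card ι : ℝ) - 1) * b) :
    ∃ μ > 0, ∀ c, softmax (fun i => if i = y then a else -b) c - (if c = y then 1 else 0) =
      -μ * (if c = y then a else -b) := by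
  have : Nonempty ι := ⟨y⟩
  set S := ∑ i, Real.exp (if i = y then a else -b) with hS
  have hSpos : 0 < S := sum_exp_pos _
  have hSval : S = Real.exp a + ((Fintype.card ι : ℝ) - 1) * Real.exp (-b) := by
    simp only [hS, apply_ite Real.exp, sum_ite_eq_add_mul]
  refine ⟨Real.exp (-b) / (S * b), by positivity, fun c => ?_⟩
  simp only [softmax, ← hS]
  split_ifs
  · field_simp
    rw [hSval, hab]
    ring
  · field_simp
    ring

section Templates

variable {E ι : Type*} [NormedAddCommGroup E] [InnerProductSpace ℝ E] [Fintype ι]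

noncomputable def templateLoss (x : E) (y : ι) (A : ι → E) : ℝ :=
  -⟪A y, x⟫ + Real.log (∑ c, Real.exp ⟪A c, x⟫)

lemma sum_softmax_sub_ite_mul_inner_le [DecidableEq ι] (x : E) (y : ι) (A B : ι → E) :
    ∑ c, (softmax (fun i => ⟪B i, x⟫) c - if c = y then 1 else 0) * ⟪A c - B c, x⟫ ≤
      templateLoss x y A - templateLoss x y B := by
  have : Nonempty ι := ⟨y⟩
  have h := sum_softmax_mul_sub_le (fun i => ⟪B i, x⟫) (fun i => ⟪A i, x⟫)
  simp only [sub_mul, sum_sub_distrib, ite_mul, one_mul, zero_mul, sum_ite_eq', mem_univ,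
    if_true, inner_sub_left, templateLoss] at h ⊢
  linarith

lemma sum_norm_sub_sq_le {A B : ι → E} (h : ∑ c, ‖A c‖ ^ 2 ≤ ∑ c, ‖B c‖ ^ 2) :
    ∑ c, ‖A c - B c‖ ^ 2 ≤ 2 * (∑ c, ‖B c‖ ^ 2 - ∑ c, ⟪B c, A c⟫) := by
  simp only [norm_sub_sq_real, sum_add_distrib, sum_sub_distrib, ← mul_sum, real_inner_comm (B _)]
  linarith

lemma templateLoss_add_mul_sum_norm_sub_sq_le [DecidableEq ι] {x : E} (hx : ‖x‖ = 1) (y : ι)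
    {s : ι → ℝ} {B : ι → E} (hB : ∀ c, B c = s c • x) {μ : ℝ} (hμ : 0 ≤ μ)
    (hstat : ∀ c, softmax s c - (if c = y then 1 else 0) = -μ * s c)
    {A : ι → E} (hA : ∑ c, ‖A c‖ ^ 2 ≤ ∑ c, ‖B c‖ ^ 2) :
    templateLoss x y B + μ / 2 * ∑ c, ‖A c - B c‖ ^ 2 ≤ templateLoss x y A := by
  have hs : (fun i => ⟪B i, x⟫) = s := by
    funext i
    rw [hB, real_inner_smul_left, real_inner_self_eq_norm_sq, hx]
    ring
  have hgrad := sum_softmax_sub_ite_mul_inner_le x y A B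
  have hlin : ∑ c, (softmax s c - if c = y then 1 else 0) * ⟪A c - B c, x⟫ =
      μ * (∑ c, ‖B c‖ ^ 2 - ∑ c, ⟪B c, A c⟫) := by
    simp only [hstat, mul_sum, ← sum_sub_distrib]
    refine sum_congr rfl fun c _ => ?_
    simp only [← real_inner_self_eq_norm_sq, hB, inner_sub_right, real_inner_smul_left,
      real_inner_smul_right, real_inner_comm x]
    ring
  rw [hs, hlin] at hgrad
  nlinarith [sum_norm_sub_sq_le hA]

end Templates

lemma le_and_eq_of_add_mul_sum_norm_sub_sq_le {E ι : Type*} [NormedAddCommGroup E] [Fintype ι]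
    {f : (ι → E) → ℝ} {A B : ι → E} {μ : ℝ}
    (hμ : 0 < μ) (h : f B + μ / 2 * ∑ c, ‖A c - B c‖ ^ 2 ≤ f A) :
    f B ≤ f A ∧ (f A = f B → A = B) := by
  have hsq : 0 ≤ ∑ c, ‖A c - B c‖ ^ 2 := sum_nonneg fun c _ => sq_nonneg _
  refine ⟨by nlinarith, fun hAB => ?_⟩
  have hsum : ∑ c, ‖A c - B c‖ ^ 2 = 0 := by nlinarith
  rw [sum_eq_zero_iff_of_nonneg fun c _ => sq_nonneg _] at hsum
  funext c
  simpa [sub_eq_zero] using hsum c (mem_univ c)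

lemma sqrt_sub_one_mul_div_eq {n : ℝ} (hn : 1 < n) (K : ℝ) :
    √((n - 1) * K / n) = (n - 1) * √(K / (n * (n - 1))) := by
  have hn1 : 0 < n - 1 := sub_pos.2 hn
  have h : (n - 1) * K / n = (n - 1) ^ 2 * (K / (n * (n - 1))) := by
    field_simp
  rw [h, Real.sqrt_mul (sq_nonneg _), Real.sqrt_sq hn1.le]

lemma sq_sqrt_add_sub_one_mul_sq_sqrt {n K : ℝ} (hn : 1 < n) (hK : 0 ≤ K) :
    √((n - 1) * K / n) ^ 2 + (n - 1) * √(K / (n * (n - 1))) ^ 2 = K := by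
  have hn1 : 0 < n - 1 := sub_pos.2 hn
  have hn0 : 0 < n := by linarith
  rw [Real.sq_sqrt (by positivity), Real.sq_sqrt (by positivity)]
  field_simp
  ring

theorem optimal_templates_general (D C : ℕ) (hC : 2 ≤ C) (K : ℝ) (hK : 0 < K)
    (x : EuclideanSpace ℝ (Fin D)) (hx : ‖x‖ = 1) (y : Fin C)
    (L : (Fin C → EuclideanSpace ℝ (Fin D)) → ℝ)
    (hL : ∀ A, L A = -⟪A y, x⟫ + Real.log (∑ c, Real.exp ⟪A c, x⟫))
    (Astar : Fin C → EuclideanSpace ℝ (Fin D))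
    (hAstar : ∀ c, Astar c =
      if c = y then Real.sqrt (((C : ℝ) - 1) * K / (C : ℝ)) • x
      else (-Real.sqrt (K / ((C : ℝ) * ((C : ℝ) - 1)))) • x) :
    (∑ c, ‖Astar c‖ ^ 2 ≤ K) ∧
      ∀ A : Fin C → EuclideanSpace ℝ (Fin D), (∑ c, ‖A c‖ ^ 2 ≤ K) →
        L Astar ≤ L A ∧ (L A = L Astar → A = Astar) := by
  have hC1 : (1 : ℝ) < C := by exact_mod_cast hC
  set a := √(((C : ℝ) - 1) * K / C)
  set b := √(K / ((C : ℝ) * ((C : ℝ) - 1)))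
  have hb : 0 < b := Real.sqrt_pos.2 (by have := sub_pos.2 hC1; positivity)
  set s : Fin C → ℝ := fun c => if c = y then a else -b
  have hAstar_eq : ∀ c, Astar c = s c • x := fun c => by
    rw [hAstar]
    split_ifs <;> simp [s, *]
  have hnorm : ∑ c, ‖Astar c‖ ^ 2 = K := by
    simp only [hAstar_eq, norm_smul, hx, mul_one, Real.norm_eq_abs, sq_abs, s, apply_ite (· ^ 2),
      sum_ite_eq_add_mul, Fintype.card_fin, neg_sq]
    exact sq_sqrt_add_sub_one_mul_sq_sqrt hC1 hK.le
  obtain ⟨μ, hμ, hstat⟩ := exists_softmax_sub_ite_eq_neg_mul (a := a) y hb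
    (by rw [Fintype.card_fin]; exact sqrt_sub_one_mul_div_eq hC1 K)
  refine ⟨hnorm.le, fun A hA => le_and_eq_of_add_mul_sum_norm_sub_sq_le hμ ?_⟩
  rw [show L = templateLoss x y from funext hL]
  exact templateLoss_add_mul_sum_norm_sub_sq_le hx y hAstar_eq hμ.le hstat (hnorm ▸ hA)

/-- the norm-constrained cross-entropy loss
`L(A) = -⟪A_y, x⟫ + log Σ_c exp ⟪A_c, x⟫` on `{A : Σ_c ‖A_c‖² ≤ K}` has the
unique global minimizer `A*_c = √((C-1)K/C) x` for `c = y` and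
`A*_c = -√(K/(C(C-1))) x` for `c ≠ y`. -/
theorem optimal_templates (D C : ℕ) (hD : 1 ≤ D) (hC : 2 ≤ C) (K : ℝ) (hK : 0 < K)
    (x : EuclideanSpace ℝ (Fin D)) (hx : ‖x‖ = 1) (y : Fin C)
    (L : (Fin C → EuclideanSpace ℝ (Fin D)) → ℝ)
    (hL : ∀ A, L A = -⟪A y, x⟫ + Real.log (∑ c, Real.exp ⟪A c, x⟫))
    (Astar : Fin C → EuclideanSpace ℝ (Fin D))
    (hAstar : ∀ c, Astar c =
      if c = y then Real.sqrt (((C : ℝ) - 1) * K / (C : ℝ)) • x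
      else (-Real.sqrt (K / ((C : ℝ) * ((C : ℝ) - 1)))) • x) :
    (∑ c, ‖Astar c‖ ^ 2 ≤ K) ∧
      ∀ A : Fin C → EuclideanSpace ℝ (Fin D), (∑ c, ‖A c‖ ^ 2 ≤ K) →
        L Astar ≤ L A ∧ (L A = L Astar → A = Astar) :=
  optimal_templates_general D C hC K hK x hx y L hL Astar hAstar
end

section
/- Let K ≥ 1 and for each k ∈ {1,…,K} let V_k ⊂ ℝ be a finite nonempty set. Let B be a real M × D' matrix, W a real D' × K matrix, and b ∈ ℝ^{D'}, and suppose that for every i ∈ {1,…,K} the quantity α_i := Σ_{d=1}^{D'} (Σ_{m=1}^{M} B_{m,d}) W_{d,i} is strictly positive. Then for v ∈ V₁ × ⋯ × V_K the following are equivalent: (i) v maximizes ⟨B(Wv + b), 1⟩ = Σ_{m=1}^M (B(Wv+b))_m over V₁ × ⋯ × V_K; (ii) v_k = max V_k for every k; (iii) v maximizes Σ_{k=1}^K v_k over V₁ × ⋯ × V_K. In particular the greedy per-coordinate maximization coincides with the global maximization through the subsequent affine layer. -/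
open Matrix

/-!
Expanding the affine layer, `⟨B(Wv + b), 1⟩ = Σ_i α_i v_i + const`. Both this objective and
`Σ_k v_k` are sums of strictly increasing functions of the separate coordinates, and such a sum
is maximized over a product of finite sets exactly when every coordinate is maximized.
-/

section SeparableMax

variable {ι α β : Type*} [Fintype ι] [DecidableEq ι]
  [AddCommMonoid β] [PartialOrder β] [IsOrderedCancelAddMonoid β]

theorem forall_sum_le_sum_iff (f : ι → α → β) (S : ι → Set α) {v : ι → α}
    (hv : ∀ i, v i ∈ S i) :
    (∀ u : ι → α, (∀ i, u i ∈ S i) → ∑ i, f i (u i) ≤ ∑ i, f i (v i)) ↔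
      ∀ i, ∀ x ∈ S i, f i x ≤ f i (v i) := by
  refine ⟨fun h i x hx => ?_, fun h u hu => Finset.sum_le_sum fun i _ => h i (u i) (hu i)⟩
  have hmem : ∀ j, Function.update v i x j ∈ S j := by
    intro j
    rcases eq_or_ne j i with rfl | hj
    · simpa using hx
    · simpa [hj] using hv j
  have hsplit : ∑ j, f j (Function.update v i x j) =
      f i x + ∑ j ∈ Finset.univ.erase i, f j (v j) := by
    rw [← Finset.add_sum_erase _ _ (Finset.mem_univ i), Function.update_self]
    congr 1
    exact Finset.sum_congr rfl fun j hj => by rw [Function.update_of_ne (Finset.ne_of_mem_erase hj)]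
  have hle := h _ hmem
  rwa [hsplit, ← Finset.add_sum_erase _ _ (Finset.mem_univ i), add_le_add_iff_right] at hle

variable [LinearOrder α]

theorem forall_sum_le_sum_iff_eq_max' (g : ι → α → β) (hg : ∀ i, StrictMono (g i))
    (V : ι → Finset α) (hne : ∀ i, (V i).Nonempty) {v : ι → α} (hv : ∀ i, v i ∈ V i) :
    (∀ u : ι → α, (∀ i, u i ∈ V i) → ∑ i, g i (u i) ≤ ∑ i, g i (v i)) ↔
      ∀ i, v i = (V i).max' (hne i) := by
  refine (forall_sum_le_sum_iff g (fun i => (V i : Set α)) hv).trans (forall_congr' fun i => ?_)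
  simp only [Finset.mem_coe, (hg i).le_iff_le, eq_comm (a := v i), Finset.max'_eq_iff, hv i,
    true_and]

end SeparableMax

theorem sum_mulVec_mulVec_add {m n k R : Type*} [Fintype m] [Fintype n] [Fintype k]
    [CommSemiring R] (B : Matrix m n R) (W : Matrix n k R) (b : n → R) (u : k → R) :
    ∑ i, (B *ᵥ (W *ᵥ u + b)) i =
      ∑ j, (∑ d, (∑ i, B i d) * W d j) * u j + ∑ d, (∑ i, B i d) * b d := by
  rw [← one_dotProduct, dotProduct_mulVec, dotProduct_add, dotProduct_mulVec]
  simp [dotProduct, vecMul]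

theorem local_global_inference_general (K M D' : ℕ)
    (V : Fin K → Finset ℝ) (hne : ∀ k, (V k).Nonempty)
    (B : Matrix (Fin M) (Fin D') ℝ) (W : Matrix (Fin D') (Fin K) ℝ)
    (b : Fin D' → ℝ)
    (hα : ∀ i : Fin K, 0 < ∑ d, (∑ m, B m d) * W d i)
    (v : Fin K → ℝ) (hv : ∀ k, v k ∈ V k) :
    ((∀ u : Fin K → ℝ, (∀ k, u k ∈ V k) →
        ∑ m, (B *ᵥ (W *ᵥ u + b)) m ≤ ∑ m, (B *ᵥ (W *ᵥ v + b)) m)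
      ↔ (∀ k, v k = (V k).max' (hne k)))
    ∧ ((∀ k, v k = (V k).max' (hne k))
      ↔ (∀ u : Fin K → ℝ, (∀ k, u k ∈ V k) → ∑ k, u k ≤ ∑ k, v k)) := by
  refine ⟨?_, (forall_sum_le_sum_iff_eq_max' (fun _ => id) (fun _ => strictMono_id) V hne hv).symm⟩
  simp only [sum_mulVec_mulVec_add, add_le_add_iff_right]
  exact forall_sum_le_sum_iff_eq_max' _ (fun i => strictMono_mul_left_of_pos (hα i)) V hne hv

/-- if every effective column sum
`α_i = Σ_d (Σ_m B_{m,d}) W_{d,i}` is strictly positive, then for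
`v ∈ V₁ × ⋯ × V_K` the following are equivalent: (i) `v` maximizes
`⟨B(Wv + b), 1⟩`; (ii) `v_k = max V_k` for all `k`; (iii) `v` maximizes
`Σ_k v_k`. -/
theorem local_global_inference (K M D' : ℕ) (hK : 1 ≤ K)
    (V : Fin K → Finset ℝ) (hne : ∀ k, (V k).Nonempty)
    (B : Matrix (Fin M) (Fin D') ℝ) (W : Matrix (Fin D') (Fin K) ℝ)
    (b : Fin D' → ℝ)
    (hα : ∀ i : Fin K, 0 < ∑ d, (∑ m, B m d) * W d i)
    (v : Fin K → ℝ) (hv : ∀ k, v k ∈ V k) :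
    ((∀ u : Fin K → ℝ, (∀ k, u k ∈ V k) →
        ∑ m, (B *ᵥ (W *ᵥ u + b)) m ≤ ∑ m, (B *ᵥ (W *ᵥ v + b)) m)
      ↔ (∀ k, v k = (V k).max' (hne k)))
    ∧ ((∀ k, v k = (V k).max' (hne k))
      ↔ (∀ u : Fin K → ℝ, (∀ k, u k ∈ V k) → ∑ k, u k ≤ ∑ k, v k)) :=
  local_global_inference_general K M D' V hne B W b hα v hv
end
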